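/- arXiv:math/0602174 — 2 statements merged into one kernel-verified Lean document; each statement's English description precedes it below -/
import Mathlib

section
/- Let G be a group generated by finite set S, π : G → H surjective onto a finite group with T = π(S), and suppose every element of H has T-word length at most n. Let g ∈ G with |g|_S ≤ L and let k = |π(g)|_T ≥ 1. Then g can be written as a product v_1 v_2 ⋯ v_k where each v_i ∈ π^{-1}(T^{±1}) and |v_i|_S ≤ L/k + 1 + 2n. -/
/-- Word length of `g` with respect to generating set `S` (using `S ∪ S⁻¹`). -/
noncomputable def wl {G : Type*} [Group G] (S : Set G) (g : G) : ℕ :=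
  sInf {n | ∃ l : List G, (∀ x ∈ l, x ∈ S ∨ x⁻¹ ∈ S) ∧ l.length = n ∧ l.prod = g}

/-- Word metric with respect to `S`. -/
noncomputable def wdist {G : Type*} [Group G] (S : Set G) (g h : G) : ℕ := wl S (g⁻¹ * h)

/-- Dead-end depth of `g` with respect to `A`: distance to the nearest element strictly
farther from the identity, `⊤` if none exists. -/
noncomputable def depth {G : Type*} [Group G] (A : Set G) (g : G) : ℕ∞ :=
  sInf ((fun g' => (wdist A g g' : ℕ∞)) '' {g' | wl A g < wl A g'})

/-- Partial product `u 0 * u 1 * ⋯ * u (i-1)`. -/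
def pprod {M : Type*} [Monoid M] (u : ℕ → M) (i : ℕ) : M := ((List.range i).map u).prod

/-!
Cut an `S`-geodesic for `g` at the positions `⌊j |g|_S / k⌋` into `k` pieces of length at most
`|g|_S / k + 1`, with partial products `x 0 = 1, …, x k = g`, and lift a `T`-geodesic for `π g`
letter by letter to partial products `y 0 = 1, …, y k` in `G`, so that `π (x k) = π (y k)`.
Moving each `x j` by at most `n` inside its coset of `ker π` gives `F j` with `π (F j) = π (y j)`,
`F 0 = 1` and `F k = g`: the quotients `(F j)⁻¹ * F (j + 1)` multiply to `g`, map to the letters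
of the `T`-geodesic, and have length at most the piece length plus `2n`.
-/

section WordLength

variable {G : Type*} [Group G] {S : Set G}

lemma wl_prod_le_length {l : List G} (hl : ∀ x ∈ l, x ∈ S ∨ x⁻¹ ∈ S) : wl S l.prod ≤ l.length :=
  Nat.sInf_le ⟨l, hl, rfl, rfl⟩

lemma exists_list_length_eq_wl {g : G} (hg : g ∈ Subgroup.closure S) :
    ∃ l : List G, (∀ x ∈ l, x ∈ S ∨ x⁻¹ ∈ S) ∧ l.length = wl S g ∧ l.prod = g := by
  rw [← Subgroup.mem_toSubmonoid, Subgroup.closure_toSubmonoid] at hg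
  obtain ⟨l, hl, hprod⟩ := Submonoid.exists_list_of_mem_closure hg
  exact Nat.sInf_mem
    (s := {n | ∃ l : List G, (∀ x ∈ l, x ∈ S ∨ x⁻¹ ∈ S) ∧ l.length = n ∧ l.prod = g})
    ⟨l.length, l, hl, rfl, hprod⟩

lemma wl_one : wl S 1 = 0 :=
  Nat.le_zero.mp (wl_prod_le_length (l := []) (by simp))

lemma eq_one_of_wl_eq_zero {g : G} (hg : g ∈ Subgroup.closure S) (h : wl S g = 0) : g = 1 := by
  obtain ⟨l, -, hlen, rfl⟩ := exists_list_length_eq_wl hg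
  rw [List.eq_nil_of_length_eq_zero (hlen.trans h), List.prod_nil]

lemma wl_inv_le {g : G} (hg : g ∈ Subgroup.closure S) : wl S g⁻¹ ≤ wl S g := by
  obtain ⟨l, hl, hlen, rfl⟩ := exists_list_length_eq_wl hg
  rw [List.prod_inv_reverse, ← hlen]
  refine (wl_prod_le_length ?_).trans (by simp)
  simp only [List.mem_reverse, List.mem_map]
  rintro _ ⟨x, hx, rfl⟩
  simpa [or_comm] using hl x hx

lemma wl_mul_le {a b : G} (ha : a ∈ Subgroup.closure S) (hb : b ∈ Subgroup.closure S) :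
    wl S (a * b) ≤ wl S a + wl S b := by
  obtain ⟨l, hl, hlen, rfl⟩ := exists_list_length_eq_wl ha
  obtain ⟨l', hl', hlen', rfl⟩ := exists_list_length_eq_wl hb
  rw [← List.prod_append, ← hlen, ← hlen', ← List.length_append]
  exact wl_prod_le_length fun x hx => (List.mem_append.mp hx).elim (hl x) (hl' x)

lemma wl_inv_prod_take_mul_prod_take_le {l : List G} (hl : ∀ x ∈ l, x ∈ S ∨ x⁻¹ ∈ S)
    {a b : ℕ} (hab : a ≤ b) : wl S ((l.take a).prod⁻¹ * (l.take b).prod) ≤ b - a := by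
  have hsplit := List.prod_take_mul_prod_drop (l.take b) a
  rw [List.take_take, min_eq_left hab] at hsplit
  rw [← hsplit, inv_mul_cancel_left]
  refine (wl_prod_le_length fun x hx => hl x ?_).trans ?_
  · exact List.mem_of_mem_take (List.mem_of_mem_drop hx)
  · simp only [List.length_drop, List.length_take]
    omega

end WordLength

lemma List.prod_ofFn_inv_mul_succ {G : Type*} [Group G] (F : ℕ → G) (k : ℕ) :
    (List.ofFn fun i : Fin k => (F i)⁻¹ * F (i + 1)).prod = (F 0)⁻¹ * F k := by
  induction k generalizing F with
  | zero => simp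
  | succ k ih =>
    rw [List.ofFn_succ, List.prod_cons]
    simp only [Fin.val_succ, Fin.val_zero]
    rw [ih (fun j => F (j + 1))]
    group

lemma Nat.mul_succ_div_sub_mul_div_le (m i k : ℕ) : m * (i + 1) / k - m * i / k ≤ m / k + 1 := by
  have := Nat.add_div_le_div_add_div_add_one (m * i) m k
  rw [Nat.mul_succ, tsub_le_iff_left]
  linarith

section Lift

variable {G H : Type*} [Group G] [Group H] (π : G →* H) {S : Set G}

lemma map_mem_closure_image (hgen : Subgroup.closure S = ⊤) (x : G) :
    π x ∈ Subgroup.closure (π '' S) := by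
  rw [← MonoidHom.map_closure, hgen]
  exact Subgroup.mem_map_of_mem π (Subgroup.mem_top x)

lemma exists_list_map_eq {lh : List H} (hlh : ∀ y ∈ lh, y ∈ π '' S ∨ y⁻¹ ∈ π '' S) :
    ∃ l : List G, (∀ x ∈ l, x ∈ S ∨ x⁻¹ ∈ S) ∧ l.map π = lh := by
  induction lh with
  | nil => exact ⟨[], by simp, rfl⟩
  | cons y lh ih =>
    obtain ⟨l, hl, rfl⟩ := ih fun z hz => hlh z (List.mem_cons_of_mem _ hz)
    have hS : ∀ x, x ∈ S ∨ x⁻¹ ∈ S → ∀ x' ∈ x :: l, x' ∈ S ∨ x'⁻¹ ∈ S := fun x hx x' hx' =>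
      (List.mem_cons.mp hx').elim (· ▸ hx) (hl x')
    rcases hlh y List.mem_cons_self with ⟨s, hs, rfl⟩ | ⟨s, hs, hy⟩
    · exact ⟨s :: l, hS s (Or.inl hs), rfl⟩
    · refine ⟨s⁻¹ :: l, hS s⁻¹ (Or.inr (by rwa [inv_inv])), ?_⟩
      rw [List.map_cons, map_inv, hy, inv_inv]

lemma exists_map_eq_wl_le {h : H} (hh : h ∈ Subgroup.closure (π '' S)) :
    ∃ x : G, π x = h ∧ wl S x ≤ wl (π '' S) h := by
  obtain ⟨lh, hlh, hlen, rfl⟩ := exists_list_length_eq_wl hh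
  obtain ⟨l, hl, rfl⟩ := exists_list_map_eq π hlh
  exact ⟨l.prod, (List.prod_hom l π).symm, hlen ▸ (wl_prod_le_length hl).trans (by simp)⟩

end Lift

section Shadowing

variable {G H : Type*} [Group G] [Group H] (π : G →* H) {S : Set G} {n : ℕ}

lemma exists_shadowing_path (hgen : Subgroup.closure S = ⊤) (hn : ∀ h : H, wl (π '' S) h ≤ n)
    (x y : ℕ → G) (k : ℕ) (hx0 : x 0 = 1) (hy0 : y 0 = 1) (hk : π (x k) = π (y k)) :
    ∃ F : ℕ → G, F 0 = 1 ∧ F k = x k ∧ ∀ j, π (F j) = π (y j) ∧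
      wl S ((F j)⁻¹ * F (j + 1)) ≤ wl S ((x j)⁻¹ * x (j + 1)) + 2 * n := by
  have hmem : ∀ z : G, z ∈ Subgroup.closure S := by simp [hgen]
  choose φ hφπ hφwl using fun z : G => exists_map_eq_wl_le π (map_mem_closure_image π hgen z)
  have hφ1 : ∀ z, π z = 1 → φ z = 1 := fun z hz =>
    eq_one_of_wl_eq_zero (hmem _) (Nat.le_zero.mp ((hφwl z).trans (hz ▸ wl_one).le))
  refine ⟨fun j => x j * φ ((x j)⁻¹ * y j), ?_, ?_, fun j => ⟨?_, ?_⟩⟩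
  · simp [hx0, hy0, hφ1]
  · simp [hφ1, hk]
  · simp [hφπ]
  · set a := φ ((x j)⁻¹ * y j)
    set b := φ ((x (j + 1))⁻¹ * y (j + 1))
    calc wl S ((x j * a)⁻¹ * (x (j + 1) * b))
        = wl S (a⁻¹ * ((x j)⁻¹ * x (j + 1)) * b) := by group
      _ ≤ wl S a⁻¹ + wl S ((x j)⁻¹ * x (j + 1)) + wl S b :=
        (wl_mul_le (hmem _) (hmem _)).trans (by gcongr; exact wl_mul_le (hmem _) (hmem _))
      _ ≤ n + wl S ((x j)⁻¹ * x (j + 1)) + n := by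
        gcongr
        · exact (wl_inv_le (hmem _)).trans ((hφwl _).trans (hn _))
        · exact (hφwl _).trans (hn _)
      _ = wl S ((x j)⁻¹ * x (j + 1)) + 2 * n := by ring

end Shadowing

theorem stmt7_general {G H : Type*} [Group G] [Group H] (π : G →* H) (S : Set G)
    (hgen : Subgroup.closure S = ⊤) (n : ℕ) (hall : ∀ x : H, wl (π '' S) x ≤ n)
    (g : G) (L k : ℕ) (hL : wl S g ≤ L) (hk : wl (π '' S) (π g) = k) (hk1 : 1 ≤ k) :
    ∃ v : Fin k → G, (List.ofFn v).prod = g ∧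
      ∀ i : Fin k, π (v i) ∈ π '' S ∪ (π '' S)⁻¹ ∧
        (wl S (v i) : ℝ) ≤ (L : ℝ) / (k : ℝ) + 1 + 2 * (n : ℝ) := by
  obtain ⟨u, hu, hu_len, rfl⟩ := exists_list_length_eq_wl (hgen ▸ Subgroup.mem_top g)
  obtain ⟨w, hw, hw_len, hw_prod⟩ := exists_list_length_eq_wl (map_mem_closure_image π hgen u.prod)
  obtain ⟨t, -, rfl⟩ := exists_list_map_eq π hw
  rw [hk, List.length_map] at hw_len
  obtain ⟨F, hF0, hFk, hF⟩ := exists_shadowing_path π hgen hall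
    (fun j => (u.take (u.length * j / k)).prod) (fun j => (t.take j).prod) k (by simp) (by simp)
    (by rw [Nat.mul_div_cancel _ hk1, List.take_length, ← hw_len, List.take_length, ← hw_prod,
      List.prod_hom])
  refine ⟨fun i => (F i)⁻¹ * F (i + 1), ?_, fun i => ⟨?_, ?_⟩⟩
  · rw [List.prod_ofFn_inv_mul_succ, hF0, hFk, inv_one, one_mul, Nat.mul_div_cancel _ hk1,
      List.take_length]
  · have hi : (i : ℕ) < t.length := hw_len ▸ i.isLt
    have hletter := hw _ (List.getElem_mem (l := t.map π) (by simpa using hi))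
    simpa [(hF i).1, (hF (i + 1)).1, List.prod_take_succ t i hi] using hletter
  · have hcut_mono : u.length * i / k ≤ u.length * (i + 1) / k :=
      Nat.div_le_div_right (Nat.mul_le_mul_left _ (Nat.le_succ i))
    have hstep := (hF i).2.trans
      (Nat.add_le_add_right (wl_inv_prod_take_mul_prod_take_le hu hcut_mono) _)
    have hpiece := Nat.mul_succ_div_sub_mul_div_le u.length i k
    have hLk : u.length / k ≤ L / k := Nat.div_le_div_right (hu_len ▸ hL)
    have hnat : wl S ((F i)⁻¹ * F (i + 1)) ≤ L / k + 1 + 2 * n := by omega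
    calc (wl S ((F i)⁻¹ * F (i + 1)) : ℝ) ≤ ((L / k : ℕ) : ℝ) + 1 + 2 * n := by exact_mod_cast hnat
      _ ≤ L / k + 1 + 2 * n := by gcongr; exact Nat.cast_div_le

/-- If every element of the finite quotient `H` has `T`-word length at most `n`, `|g|_S ≤ L`
and `k = |π(g)|_T ≥ 1`, then `g = v₁ ⋯ v_k` with each `π(vᵢ) ∈ T^{±1}` and
`|vᵢ|_S ≤ L/k + 1 + 2n`. -/
theorem stmt7 {G H : Type*} [Group G] [Group H] [Finite H] (π : G →* H)
    (hsurj : Function.Surjective π) (S : Set G) (hfin : S.Finite)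
    (hgen : Subgroup.closure S = ⊤) (n : ℕ) (hall : ∀ x : H, wl (π '' S) x ≤ n)
    (g : G) (L k : ℕ) (hL : wl S g ≤ L) (hk : wl (π '' S) (π g) = k) (hk1 : 1 ≤ k) :
    ∃ v : Fin k → G, (List.ofFn v).prod = g ∧
      ∀ i : Fin k, π (v i) ∈ π '' S ∪ (π '' S)⁻¹ ∧
        (wl S (v i) : ℝ) ≤ (L : ℝ) / (k : ℝ) + 1 + 2 * (n : ℝ) :=
  stmt7_general π S hgen n hall g L k hL hk hk1
end

section
/- For every positive integer n, the group ℤ admits a finite generating set A such that the dead-end depth of ℤ with respect to A is at least n. -/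
/-!
In `ℤ` generated by `K` and `K + 1`, every `m` with `|m| ≤ K²` is a word of length at most `K`.
For `K = 2n` the element `n`
has length exactly `K`: from `a · 2n + b · (2n + 1) = n` we get `b ≡ n (mod 2n)` and
`a ≡ -n (mod 2n + 1)`, so `|a|, |b| ≥ n`. Hence every element longer than `n` lies outside
`[-K², K²]`, and since each letter moves by at most `K + 1`, it is at distance at least `n`
from `n`.
-/

open Multiplicative

section WordLength

variable {G : Type*} [Group G]

def IsWord (S : Set G) (l : List G) : Prop := ∀ x ∈ l, x ∈ S ∨ x⁻¹ ∈ S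

variable {S : Set G}

theorem IsWord.append {l₁ l₂ : List G} (h₁ : IsWord S l₁) (h₂ : IsWord S l₂) :
    IsWord S (l₁ ++ l₂) :=
  List.forall_mem_append.2 ⟨h₁, h₂⟩

theorem exists_isWord_prod_eq {g : G} (hg : g ∈ Subgroup.closure S) :
    ∃ l, IsWord S l ∧ l.prod = g := by
  induction hg using Subgroup.closure_induction'' with
  | mem x hx => exact ⟨[x], by simp [IsWord, hx], by simp⟩
  | inv_mem x hx => exact ⟨[x⁻¹], by simp [IsWord, hx], by simp⟩
  | one => exact ⟨[], by simp [IsWord], rfl⟩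
  | mul x y _ _ hx hy =>
    obtain ⟨l₁, hl₁, rfl⟩ := hx
    obtain ⟨l₂, hl₂, rfl⟩ := hy
    exact ⟨l₁ ++ l₂, hl₁.append hl₂, List.prod_append⟩

theorem wl_le_length {l : List G} (hl : IsWord S l) : wl S l.prod ≤ l.length :=
  Nat.sInf_le ⟨l, hl, rfl, rfl⟩

theorem exists_isWord_length_eq_wl {g : G} (hg : g ∈ Subgroup.closure S) :
    ∃ l, IsWord S l ∧ l.length = wl S g ∧ l.prod = g := by
  obtain ⟨l, hl, hprod⟩ := exists_isWord_prod_eq hg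
  have hne : {n | ∃ l : List G, IsWord S l ∧ l.length = n ∧ l.prod = g}.Nonempty :=
    ⟨l.length, l, hl, rfl, hprod⟩
  exact Nat.sInf_mem hne

theorem exists_isWord_zpow {x : G} (hx : x ∈ S) (a : ℤ) :
    ∃ l, IsWord S l ∧ l.length = a.natAbs ∧ l.prod = x ^ a := by
  cases a with
  | ofNat k => exact ⟨List.replicate k x, by simp [IsWord, hx], by simp, by simp⟩
  | negSucc k =>
    exact ⟨List.replicate (k + 1) x⁻¹, by simp [IsWord, hx], by simp, by simp [zpow_negSucc]⟩

theorem wl_zpow_mul_zpow_le {x y : G} (hx : x ∈ S) (hy : y ∈ S) (a b : ℤ) :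
    wl S (x ^ a * y ^ b) ≤ a.natAbs + b.natAbs := by
  obtain ⟨l₁, hl₁, hlen₁, hprod₁⟩ := exists_isWord_zpow hx a
  obtain ⟨l₂, hl₂, hlen₂, hprod₂⟩ := exists_isWord_zpow hy b
  simpa [hlen₁, hlen₂, hprod₁, hprod₂] using wl_le_length (hl₁.append hl₂)

theorem le_depth {g : G} {r : ℕ} (h : ∀ g', wl S g < wl S g' → r ≤ wdist S g g') :
    (r : ℕ∞) ≤ depth S g :=
  le_sInf <| by
    rintro _ ⟨g', hg', rfl⟩
    exact Nat.cast_le.2 (h g' hg')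

end WordLength

section TwoGenerators

variable {G : Type*} [CommGroup G] {x y : G}

theorem IsWord.exists_zpow_mul_zpow {l : List G} (hl : IsWord {x, y} l) :
    ∃ a b : ℤ, l.prod = x ^ a * y ^ b ∧ a.natAbs + b.natAbs ≤ l.length := by
  induction l with
  | nil => exact ⟨0, 0, by simp, by simp⟩
  | cons z l ih =>
    obtain ⟨a, b, hprod, hlen⟩ := ih fun w hw => hl w (List.mem_cons_of_mem _ hw)
    have hz : z = x ∨ z = y ∨ z = x⁻¹ ∨ z = y⁻¹ := by
      rcases hl z List.mem_cons_self with h | h <;> simp only [Set.mem_insert_iff,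
        Set.mem_singleton_iff, inv_eq_iff_eq_inv] at h <;> tauto
    simp only [List.prod_cons, List.length_cons, hprod]
    rcases hz with rfl | rfl | rfl | rfl
    · exact ⟨a + 1, b, by simp [zpow_add, mul_comm, mul_left_comm], by omega⟩
    · exact ⟨a, b + 1, by simp [zpow_add, mul_comm, mul_left_comm], by omega⟩
    · exact ⟨a - 1, b, by simp [zpow_sub, mul_assoc, mul_comm, mul_left_comm], by omega⟩
    · exact ⟨a, b - 1, by simp [zpow_sub, mul_assoc, mul_comm], by omega⟩

theorem exists_zpow_mul_zpow_natAbs_le_wl {g : G} (hg : g ∈ Subgroup.closure {x, y}) :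
    ∃ a b : ℤ, g = x ^ a * y ^ b ∧ a.natAbs + b.natAbs ≤ wl {x, y} g := by
  obtain ⟨l, hl, hlen, rfl⟩ := exists_isWord_length_eq_wl hg
  obtain ⟨a, b, hprod, hab⟩ := hl.exists_zpow_mul_zpow
  exact ⟨a, b, hprod, hlen ▸ hab⟩

end TwoGenerators

theorem le_abs_mul_sub {c t : ℤ} (s : ℤ) (ht : 0 ≤ t) (htc : 2 * t ≤ c) :
    t ≤ |c * s - t| := by
  rcases le_or_gt s 0 with hs | hs
  · have : c * s ≤ 0 := mul_nonpos_of_nonneg_of_nonpos (by omega) hs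
    exact le_abs.2 (Or.inr (by omega))
  · have : c ≤ c * s := le_mul_of_one_le_right (by omega) hs
    exact le_abs.2 (Or.inl (by omega))

def consecutiveGens (K : ℤ) : Set (Multiplicative ℤ) := {ofAdd K, ofAdd (K + 1)}

section Consecutive

variable {K : ℤ}

theorem ofAdd_mem_consecutiveGens : ofAdd K ∈ consecutiveGens K := Set.mem_insert _ _

theorem ofAdd_add_one_mem_consecutiveGens : ofAdd (K + 1) ∈ consecutiveGens K :=
  Set.mem_insert_of_mem _ rfl

theorem ofAdd_zpow_mul_zpow (K a b : ℤ) :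
    ofAdd K ^ a * ofAdd (K + 1) ^ b = ofAdd (a * K + b * (K + 1)) := by
  rw [← ofAdd_zsmul, ← ofAdd_zsmul, ← ofAdd_add, smul_eq_mul, smul_eq_mul]

theorem closure_consecutiveGens (K : ℤ) : Subgroup.closure (consecutiveGens K) = ⊤ := by
  refine eq_top_iff.2 fun g _ => ?_
  have hg : ofAdd K ^ (-g.toAdd) * ofAdd (K + 1) ^ g.toAdd = g := by
    rw [ofAdd_zpow_mul_zpow, show -g.toAdd * K + g.toAdd * (K + 1) = g.toAdd by ring, ofAdd_toAdd]
  rw [← hg]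
  exact mul_mem (zpow_mem (Subgroup.subset_closure ofAdd_mem_consecutiveGens) _)
    (zpow_mem (Subgroup.subset_closure ofAdd_add_one_mem_consecutiveGens) _)

theorem wl_ofAdd_le (a b : ℤ) :
    wl (consecutiveGens K) (ofAdd (a * K + b * (K + 1))) ≤ a.natAbs + b.natAbs := by
  rw [← ofAdd_zpow_mul_zpow]
  exact wl_zpow_mul_zpow_le ofAdd_mem_consecutiveGens ofAdd_add_one_mem_consecutiveGens a b

theorem exists_coeffs_natAbs_le_wl (m : ℤ) :
    ∃ a b : ℤ, a * K + b * (K + 1) = m ∧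
      a.natAbs + b.natAbs ≤ wl (consecutiveGens K) (ofAdd m) := by
  have hm : ofAdd m ∈ Subgroup.closure (consecutiveGens K) :=
    closure_consecutiveGens K ▸ Subgroup.mem_top _
  obtain ⟨a, b, h, hab⟩ := exists_zpow_mul_zpow_natAbs_le_wl hm
  rw [ofAdd_zpow_mul_zpow] at h
  exact ⟨a, b, (ofAdd.injective h).symm, hab⟩

theorem abs_le_mul_wl (hK : 0 ≤ K) (m : ℤ) :
    |m| ≤ (K + 1) * wl (consecutiveGens K) (ofAdd m) := by
  obtain ⟨a, b, rfl, hab⟩ := exists_coeffs_natAbs_le_wl (K := K) m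
  calc |a * K + b * (K + 1)|
      ≤ |a| * K + |b| * (K + 1) := by
        simpa [abs_mul, abs_of_nonneg hK, abs_of_nonneg (by omega : 0 ≤ K + 1)]
          using abs_add_le (a * K) (b * (K + 1))
    _ ≤ (K + 1) * (a.natAbs + b.natAbs : ℕ) := by push_cast; nlinarith [abs_nonneg a]
    _ ≤ (K + 1) * wl (consecutiveGens K) (ofAdd (a * K + b * (K + 1))) := by gcongr

theorem wl_ofAdd_le_of_abs_le_sq (hK : 0 < K) {m : ℤ} (hm : |m| ≤ K ^ 2) :
    (wl (consecutiveGens K) (ofAdd m) : ℤ) ≤ K := by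
  -- `m = q K + r = (q - r) K + r (K + 1)`; if that word is too long, adding `K + 1` letters `K`
  -- and removing `K` letters `K + 1` gives one with at most `K` letters.
  set q := m / K
  set r := m % K
  have hdiv : K * q + r = m := Int.mul_ediv_add_emod m K
  have hr : 0 ≤ r ∧ r < K := ⟨Int.emod_nonneg m hK.ne', Int.emod_lt_of_pos m hK⟩
  have hq : -K ≤ q ∧ q ≤ K := by
    rw [abs_le] at hm
    constructor <;> nlinarith
  have h₁ := wl_ofAdd_le (K := K) (q - r) r
  have h₂ := wl_ofAdd_le (K := K) (q - r + K + 1) (r - K)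
  rw [show (q - r) * K + r * (K + 1) = m by linear_combination hdiv] at h₁
  rw [show (q - r + K + 1) * K + (r - K) * (K + 1) = m by linear_combination hdiv] at h₂
  omega

theorem le_depth_ofAdd (hK : 0 < K) {t : ℤ} {r : ℕ}
    (ht : K ≤ wl (consecutiveGens K) (ofAdd t)) (hr : |t| + (K + 1) * (r - 1) ≤ K ^ 2) :
    (r : ℕ∞) ≤ depth (consecutiveGens K) (ofAdd t) := by
  refine le_depth fun g hg => ?_
  obtain ⟨m, rfl⟩ := ofAdd.surjective g
  by_contra! hlt
  have hdist : wdist (consecutiveGens K) (ofAdd t) (ofAdd m) =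
      wl (consecutiveGens K) (ofAdd (m - t)) := by
    rw [wdist, ← ofAdd_neg, ← ofAdd_add, neg_add_eq_sub]
  have hmt := abs_le_mul_wl hK.le (m - t)
  have hm : |m| ≤ K ^ 2 := by
    calc |m| ≤ |t| + |m - t| := by simpa using abs_add_le t (m - t)
      _ ≤ |t| + (K + 1) * (r - 1) := by
        gcongr
        refine hmt.trans (mul_le_mul_of_nonneg_left ?_ (by omega))
        omega
      _ ≤ K ^ 2 := hr
  have := wl_ofAdd_le_of_abs_le_sq hK hm
  omega

theorem two_mul_le_wl_ofAdd {n : ℤ} (hn : 0 ≤ n) :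
    2 * n ≤ wl (consecutiveGens (2 * n)) (ofAdd n) := by
  obtain ⟨a, b, h, hab⟩ := exists_coeffs_natAbs_le_wl (K := 2 * n) n
  -- `a ≡ -n [ZMOD 2 * n + 1]` and `b ≡ n [ZMOD 2 * n]`
  have ha : n ≤ |a| := by
    simpa [show (2 * n + 1) * (a + b) - n = a by linear_combination h]
      using le_abs_mul_sub (a + b) hn (by omega : 2 * n ≤ 2 * n + 1)
  have hb : n ≤ |b| := by
    simpa [abs_sub_comm, show n - 2 * n * (a + b) = b by linear_combination -h]
      using le_abs_mul_sub (a + b) hn le_rfl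
  rw [← Int.natCast_natAbs] at ha hb
  omega

end Consecutive

/-- For every positive integer `n`, the group `ℤ` admits a finite generating set with
respect to which its dead-end depth is at least `n`. -/
theorem stmt15 (n : ℕ) (hn : 0 < n) :
    ∃ A : Set (Multiplicative ℤ), A.Finite ∧ Subgroup.closure A = ⊤ ∧
      (n : ℕ∞) ≤ ⨆ g : Multiplicative ℤ, depth A g := by
  refine ⟨consecutiveGens (2 * n), (Set.finite_singleton _).insert _,
    closure_consecutiveGens _, le_trans ?_ (le_iSup _ (ofAdd (n : ℤ)))⟩
  refine le_depth_ofAdd (by omega) (two_mul_le_wl_ofAdd (by omega)) ?_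
  rw [abs_of_nonneg (by omega)]
  nlinarith
end
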